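/- arXiv:0704.2754 — 4 statements merged into one kernel-verified Lean document; each statement's English description precedes it below -/
import Mathlib

section
/- For every n ≥ 1, the number of decorated n-connectors whose underlying partition has at least one horizontal block is |T_n^=| = 2^{n−1}·((2n−1)!! − n!). (Lemma 4.3 of the paper.) -/
/-!
A decorated connector is a fixed-point-free involution `σ` of the `2n` points together with an
even set of its `n` blocks. There are `(2n-1)‼` such involutions (pair a chosen point with any of
the other `2n-1` points, then recurse on the rest), and those without a horizontal block are the
involutions `inl i ↦ inr (π i)` for a permutation `π`, so there are `n!` of them. For a fixed `σ`
the decorations are the Boolean functions on the blocks with even support, and toggling one block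
is a parity-reversing involution, so exactly half of the `2^n` functions qualify.
-/

/-- A decorated `n`-connector: a fixed-point-free involution `conn` of the `2n`-point
set (top points `Sum.inl i`, bottom points `Sum.inr i`) — i.e. an `n`-connector —
together with a decoration `dec` of its blocks (a Boolean function constant on the
blocks `{x, conn x}`), such that the number of decorated blocks is even.  Since every
block has exactly two points, the number of decorated blocks is even if and only if
the number of decorated points is divisible by `4`. -/
structure DecConnector (n : ℕ) where
  conn : Equiv.Perm (Fin n ⊕ Fin n)
  invol : ∀ x, conn (conn x) = x
  fpf : ∀ x, conn x ≠ x
  dec : Fin n ⊕ Fin n → Bool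
  dec_block : ∀ x, dec (conn x) = dec x
  even_blocks : 4 ∣ (Finset.univ.filter fun x => dec x = true).card

open Finset Function Equiv
open scoped Nat

section EvenSupport

variable {Q : Type*} [DecidableEq Q]

def toggleAt (q : Q) (f : Q → Bool) : Q → Bool := update f q (!f q)

lemma toggleAt_involutive (q : Q) : Involutive (toggleAt q) :=
  fun f => by simp [toggleAt]

variable [Fintype Q]

lemma even_card_toggleAt_iff (q : Q) (f : Q → Bool) :
    Even #{x | toggleAt q f x = true} ↔ ¬Even #{x | f x = true} := by
  have hsplit (g : Q → Bool) (hg : ∀ x ≠ q, g x = f x) : #{x | g x = true} =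
      (if g q = true then 1 else 0) + ∑ x ∈ univ.erase q, if f x = true then 1 else 0 := by
    rw [card_filter, ← add_sum_erase _ _ (mem_univ q)]
    congr 1
    exact sum_congr rfl fun x hx => by rw [hg x (ne_of_mem_erase hx)]
  rw [hsplit _ fun x hx => update_of_ne hx .., hsplit f fun _ _ => rfl]
  cases hq : f q <;> simp [toggleAt, hq, parity_simps]

theorem card_fun_bool_even_support [Nonempty Q] :
    Fintype.card {f : Q → Bool // Even #{q | f q = true}} = 2 ^ (Fintype.card Q - 1) := by
  inhabit Q
  have hodd : Fintype.card {f : Q → Bool // ¬Even #{q | f q = true}} =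
      Fintype.card {f : Q → Bool // Even #{q | f q = true}} :=
    Fintype.card_congr <| ((toggleAt_involutive default).toPerm _).subtypeEquiv
      fun f => (even_card_toggleAt_iff default f).symm
  have htotal := Fintype.card_subtype_compl fun f : Q → Bool => Even #{q | f q = true}
  have hle := Fintype.card_subtype_le fun f : Q → Bool => Even #{q | f q = true}
  rw [hodd, Fintype.card_fun, Fintype.card_bool] at htotal
  rw [Fintype.card_fun, Fintype.card_bool] at hle
  have : 2 ^ Fintype.card Q = 2 * 2 ^ (Fintype.card Q - 1) := by
    rw [← pow_succ', Nat.sub_add_cancel Fintype.card_pos]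
  omega

end EvenSupport

lemma card_filter_comp_of_card_fiber {α β : Type*} [Fintype α] [Fintype β] [DecidableEq β]
    (π : α → β) {k : ℕ} (hπ : ∀ b, #{x | π x = b} = k) (p : β → Prop) [DecidablePred p] :
    #{x | p (π x)} = k * #{b | p b} := by
  rw [card_eq_sum_card_fiberwise (f := π) (t := {b | p b}) fun x hx => by simpa using hx,
    sum_congr rfl fun b hb => ?_, sum_const, smul_eq_mul, mul_comm]
  rw [filter_filter, ← hπ b]
  congr 1
  refine filter_congr fun x _ => ⟨And.right, fun hx => ⟨?_, hx⟩⟩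
  rw [hx]
  simpa using hb

section Blocks

variable {α : Type*} {σ : Perm α}

def blockSetoid (hσ : Involutive σ) : Setoid α where
  r x y := y = x ∨ y = σ x
  iseqv := by
    refine ⟨fun x => Or.inl rfl, ?_, ?_⟩
    · rintro x y (rfl | rfl)
      · exact Or.inl rfl
      · exact Or.inr (hσ x).symm
    · rintro x y z (rfl | rfl) (rfl | rfl)
      exacts [Or.inl rfl, Or.inr rfl, Or.inr rfl, Or.inl (hσ x)]

variable [DecidableEq α]

instance (hσ : Involutive σ) : DecidableRel (blockSetoid hσ).r := fun _ _ => instDecidableOr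

lemma blockSetoid_filter_mk_eq [Fintype α] (hσ : Involutive σ) (a : α) :
    ({x | Quotient.mk (blockSetoid hσ) x = Quotient.mk _ a} : Finset α) = {a, σ a} := by
  ext x
  simp only [mem_filter, mem_univ, true_and, mem_insert, mem_singleton, Quotient.eq]
  change a = x ∨ a = σ x ↔ _
  rw [← hσ.eq_iff, eq_comm, @eq_comm _ (σ a)]

variable [Fintype α]

lemma blockSetoid_card_fiber (hσ : Involutive σ) (hfix : ∀ x, σ x ≠ x)
    (b : Quotient (blockSetoid hσ)) :
    #{x | Quotient.mk _ x = b} = 2 := by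
  induction b using Quotient.ind with
  | _ a => rw [blockSetoid_filter_mk_eq, card_pair (hfix a).symm]

lemma card_quotient_blockSetoid (hσ : Involutive σ) (hfix : ∀ x, σ x ≠ x) {n : ℕ}
    (hα : Fintype.card α = 2 * n) :
    Fintype.card (Quotient (blockSetoid hσ)) = n := by
  have := card_filter_comp_of_card_fiber _ (blockSetoid_card_fiber hσ hfix) fun _ => True
  simp only [filter_true, card_univ, hα] at this
  omega

abbrev Decoration (σ : Perm α) : Type _ :=
  {d : α → Bool // (∀ x, d (σ x) = d x) ∧ 4 ∣ #{x | d x = true}}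

def decorationEquiv (hσ : Involutive σ) (hfix : ∀ x, σ x ≠ x) :
    Decoration σ ≃ {g : Quotient (blockSetoid hσ) → Bool // Even #{b | g b = true}} := by
  have hcard (g : Quotient (blockSetoid hσ) → Bool) :
      (4 ∣ #{x | g (Quotient.mk _ x) = true}) ↔ Even #{b | g b = true} := by
    rw [card_filter_comp_of_card_fiber _ (blockSetoid_card_fiber hσ hfix) fun b => g b = true,
      even_iff_two_dvd, show 4 = 2 * 2 from rfl, Nat.mul_dvd_mul_iff_left two_pos]
  exact
  { toFun := fun d => ⟨Quotient.lift d.1 (by rintro x y (rfl | rfl) <;> simp [d.2.1]),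
      (hcard _).1 d.2.2⟩
    invFun := fun g => ⟨g.1 ∘ Quotient.mk _,
      fun x => congrArg g.1 (Quotient.sound (Or.inr (hσ x).symm)), (hcard _).2 g.2⟩
    left_inv := fun d => rfl
    right_inv := fun g => Subtype.ext (funext fun b => Quotient.inductionOn b fun _ => rfl) }

theorem card_decoration [Nonempty α] (hσ : Involutive σ) (hfix : ∀ x, σ x ≠ x) {n : ℕ}
    (hα : Fintype.card α = 2 * n) : Fintype.card (Decoration σ) = 2 ^ (n - 1) := by
  have : Nonempty (Quotient (blockSetoid hσ)) := Nonempty.map (Quotient.mk _) ‹_›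
  rw [Fintype.card_congr (decorationEquiv hσ hfix), card_fun_bool_even_support,
    card_quotient_blockSetoid hσ hfix hα]

end Blocks

lemma eq_or_eq_or_exists_compl {α : Type*} (a b x : α) :
    x = a ∨ x = b ∨ ∃ y : {x // x ≠ a ∧ x ≠ b}, x = y := by
  by_cases hxa : x = a; · exact .inl hxa
  by_cases hxb : x = b; · exact .inr (.inl hxb)
  exact .inr (.inr ⟨⟨x, hxa, hxb⟩, rfl⟩)

abbrev FixedPointFreeInvolution (α : Type*) : Type _ :=
  {σ : Perm α // (∀ x, σ (σ x) = x) ∧ ∀ x, σ x ≠ x}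

namespace FixedPointFreeInvolution

variable {α : Type*} [DecidableEq α] {a b : α}

def restrictCompl (σ : FixedPointFreeInvolution α) (hab : σ.1 a = b) :
    FixedPointFreeInvolution {x // x ≠ a ∧ x ≠ b} :=
  ⟨σ.1.subtypePerm fun x => by
      subst hab
      rw [Ne, Ne, Ne, Ne, Involutive.eq_iff σ.2.1, σ.1.apply_eq_iff_eq, and_comm],
    fun x => Subtype.ext (σ.2.1 x), fun x h => σ.2.2 x (congrArg Subtype.val h)⟩

section extendSwap

variable (hab : a ≠ b) (τ : FixedPointFreeInvolution {x // x ≠ a ∧ x ≠ b})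

lemma swap_mul_ofSubtype_apply_left : (swap a b * Perm.ofSubtype τ.1) a = b := by
  rw [Perm.mul_apply, Perm.ofSubtype_apply_of_not_mem _ (by simp), swap_apply_left]

lemma swap_mul_ofSubtype_apply_right : (swap a b * Perm.ofSubtype τ.1) b = a := by
  rw [Perm.mul_apply, Perm.ofSubtype_apply_of_not_mem _ (by simp), swap_apply_right]

lemma swap_mul_ofSubtype_apply_of_ne (x : {x // x ≠ a ∧ x ≠ b}) :
    (swap a b * Perm.ofSubtype τ.1) x = τ.1 x := by
  rw [Perm.mul_apply, Perm.ofSubtype_apply_coe, swap_apply_of_ne_of_ne (τ.1 x).2.1 (τ.1 x).2.2]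

def extendSwap : FixedPointFreeInvolution α := by
  refine ⟨swap a b * Perm.ofSubtype τ.1, fun x => ?_, fun x => ?_⟩ <;>
  obtain rfl | rfl | ⟨x, rfl⟩ := eq_or_eq_or_exists_compl a b x
  · rw [swap_mul_ofSubtype_apply_left, swap_mul_ofSubtype_apply_right]
  · rw [swap_mul_ofSubtype_apply_right, swap_mul_ofSubtype_apply_left]
  · rw [swap_mul_ofSubtype_apply_of_ne, swap_mul_ofSubtype_apply_of_ne, τ.2.1]
  · rw [swap_mul_ofSubtype_apply_left]; exact hab.symm
  · rw [swap_mul_ofSubtype_apply_right]; exact hab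
  · rw [swap_mul_ofSubtype_apply_of_ne]; exact fun h => τ.2.2 x (Subtype.ext h)

end extendSwap

def fiberEquiv (hab : a ≠ b) :
    {σ : FixedPointFreeInvolution α // σ.1 a = b} ≃
      FixedPointFreeInvolution {x // x ≠ a ∧ x ≠ b} where
  toFun σ := restrictCompl σ.1 σ.2
  invFun τ := ⟨extendSwap hab τ, swap_mul_ofSubtype_apply_left τ⟩
  left_inv := by
    rintro ⟨σ, rfl⟩
    refine Subtype.ext <| Subtype.ext <| Perm.ext fun x => ?_
    obtain rfl | rfl | ⟨x, rfl⟩ := eq_or_eq_or_exists_compl a (σ.1 a) x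
    · exact swap_mul_ofSubtype_apply_left _
    · exact (swap_mul_ofSubtype_apply_right _).trans (σ.2.1 a).symm
    · exact swap_mul_ofSubtype_apply_of_ne _ x
  right_inv τ := Subtype.ext <| Perm.ext fun x => Subtype.ext <| swap_mul_ofSubtype_apply_of_ne τ x

lemma card_compl_pair [Fintype α] (hab : a ≠ b) :
    Fintype.card {x // x ≠ a ∧ x ≠ b} = Fintype.card α - 2 := by
  rw [Fintype.card_subtype, ← card_pair hab, ← card_compl]
  congr 1
  ext x
  simp

theorem card_eq_doubleFactorial [Fintype α] {n : ℕ} (hα : Fintype.card α = 2 * n) :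
    Fintype.card (FixedPointFreeInvolution α) = (2 * n - 1)‼ := by
  induction n generalizing α with
  | zero =>
    have : IsEmpty α := Fintype.card_eq_zero_iff.mp hα
    exact Fintype.card_eq_one_iff.mpr ⟨⟨1, isEmptyElim, isEmptyElim⟩,
      fun _ => Subtype.ext (Subsingleton.elim _ _)⟩
  | succ n ih =>
    obtain ⟨a⟩ : Nonempty α := Fintype.card_pos_iff.mp (by omega)
    have hfiber : ∀ b ∈ univ.erase a,
        #{σ : FixedPointFreeInvolution α | σ.1 a = b} = (2 * n - 1)‼ := fun b hb => by
      rw [← Fintype.card_subtype, Fintype.card_congr (fiberEquiv (ne_of_mem_erase hb).symm),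
        ih (by rw [card_compl_pair (ne_of_mem_erase hb).symm]; omega)]
    rw [← card_univ, card_eq_sum_card_fiberwise (f := fun σ => σ.1 a) (t := univ.erase a)
        fun σ _ => mem_erase.mpr ⟨σ.2.2 a, mem_univ _⟩,
      sum_congr rfl hfiber, sum_const, card_erase_of_mem (mem_univ a), card_univ, hα,
      smul_eq_mul, show 2 * (n + 1) - 1 = 2 * n + 1 by omega, Nat.doubleFactorial_add_one]

section SideSwapping

variable {β γ : Type*}

def ofEquiv (e : β ≃ γ) : FixedPointFreeInvolution (β ⊕ γ) :=
  ⟨(sumCongr e e.symm).trans (sumComm γ β), by rintro (b | c) <;> simp,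
    by rintro (b | c) <;> simp⟩

def sideSwappingEquiv :
    {σ : FixedPointFreeInvolution (β ⊕ γ) // ∀ x, (σ.1 x).isLeft ≠ x.isLeft} ≃ (β ≃ γ) where
  toFun σ :=
    { toFun b := (σ.1.1 (.inl b)).getRight (by simpa using σ.2 (.inl b))
      invFun c := (σ.1.1 (.inr c)).getLeft (by simpa using σ.2 (.inr c))
      left_inv b := by simp [σ.1.2.1]
      right_inv c := by simp [σ.1.2.1] }
  invFun e := ⟨ofEquiv e, by rintro (b | c) <;> simp [ofEquiv]⟩
  left_inv σ := by ext (b | c) <;> simp [ofEquiv]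
  right_inv e := by ext b; simp [ofEquiv]

end SideSwapping

end FixedPointFreeInvolution

def decConnectorEquiv (n : ℕ) :
    {c : DecConnector n // ∃ x, (c.conn x).isLeft = x.isLeft} ≃
      Σ σ : {σ : FixedPointFreeInvolution (Fin n ⊕ Fin n) // ∃ x, (σ.1 x).isLeft = x.isLeft},
        Decoration σ.1.1 where
  toFun c := ⟨⟨⟨c.1.conn, c.1.invol, c.1.fpf⟩, c.2⟩, ⟨c.1.dec, c.1.dec_block, c.1.even_blocks⟩⟩
  invFun s := ⟨⟨s.1.1.1, s.1.1.2.1, s.1.1.2.2, s.2.1, s.2.2.1, s.2.2.2⟩, s.1.2⟩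
  left_inv _ := rfl
  right_inv _ := rfl

lemma card_withHorizontal (n : ℕ) :
    Fintype.card {σ : FixedPointFreeInvolution (Fin n ⊕ Fin n) //
      ∃ x, (σ.1 x).isLeft = x.isLeft} = (2 * n - 1)‼ - n ! := by
  have hα : Fintype.card (Fin n ⊕ Fin n) = 2 * n := by simp [two_mul]
  have hfree : Fintype.card {σ : FixedPointFreeInvolution (Fin n ⊕ Fin n) //
      ∀ x, (σ.1 x).isLeft ≠ x.isLeft} = n ! := by
    rw [Fintype.card_congr FixedPointFreeInvolution.sideSwappingEquiv, Fintype.card_perm,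
      Fintype.card_fin]
  rw [← FixedPointFreeInvolution.card_eq_doubleFactorial hα, ← hfree,
    ← Fintype.card_subtype_compl]
  exact Fintype.card_congr (Equiv.subtypeEquivRight fun _ => not_forall_not.symm)

theorem card_decConnectors_withHorizontal_general (n : ℕ) :
    Nat.card {c : DecConnector n // ∃ x, (c.conn x).isLeft = x.isLeft} =
      2 ^ (n - 1) * (Nat.doubleFactorial (2 * n - 1) - Nat.factorial n) := by
  have hα : Fintype.card (Fin n ⊕ Fin n) = 2 * n := by simp [two_mul]
  have hdec (σ : {σ : FixedPointFreeInvolution (Fin n ⊕ Fin n) //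
      ∃ x, (σ.1 x).isLeft = x.isLeft}) : Fintype.card (Decoration σ.1.1) = 2 ^ (n - 1) :=
    have : Nonempty (Fin n ⊕ Fin n) := σ.2.nonempty
    card_decoration σ.1.2.1 σ.1.2.2 hα
  rw [Nat.card_congr (decConnectorEquiv n), Nat.card_eq_fintype_card, Fintype.card_sigma,
    sum_congr rfl fun σ _ => hdec σ, sum_const, card_univ, card_withHorizontal, smul_eq_mul,
    mul_comm]

/-- For every `n ≥ 1` the number of decorated `n`-connectors whose
underlying partition has at least one horizontal block (a block `{x, conn x}` with
both points on the same side) is `|T_n^=| = 2^(n-1) · ((2n-1)!! − n!)`. -/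
theorem card_decConnectors_withHorizontal (n : ℕ) (hn : 1 ≤ n) :
    Nat.card {c : DecConnector n // ∃ x, (c.conn x).isLeft = x.isLeft} =
      2 ^ (n - 1) * (Nat.doubleFactorial (2 * n - 1) - Nat.factorial n) :=
  card_decConnectors_withHorizontal_general n
end

section
/- For every n ≥ 1, the cardinality of the disjoint union T_n ⊔ T_n^= ⊔ (T_n^0 ∩ T_n^=) equals d(n) = (2^n + 1)·(2n−1)!! − (2^{n−1} + 1)·n!. (This is the basis count for the Brauer diagram algebra BrD(D_n) in the proof of Proposition 4.6, combining Lemma 4.3 with the definition of d(n).) -/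
open Finset Equiv Equiv.Perm Sum
open scoped Nat

theorem Finset.card_powerset_filter_even {α : Type*} {s : Finset α} (hs : s.Nonempty) :
    #{t ∈ s.powerset | Even #t} = 2 ^ (#s - 1) := by
  classical
  have hsum : #{t ∈ s.powerset | Even #t} + #{t ∈ s.powerset | ¬Even #t} = 2 ^ #s := by
    rw [card_filter_add_card_filter_not, card_powerset]
  have hdiff : (#{t ∈ s.powerset | Even #t} : ℤ) - #{t ∈ s.powerset | ¬Even #t} = 0 := by
    rw [← sum_powerset_neg_one_pow_card_of_nonempty hs,
      ← sum_filter_add_sum_filter_not _ (fun t => Even #t),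
      sum_congr rfl fun t ht => (mem_filter.1 ht).2.neg_one_pow,
      sum_congr rfl fun t ht => Nat.not_even_iff_odd.1 (mem_filter.1 ht).2 |>.neg_one_pow]
    simp only [sum_const, nsmul_eq_mul, mul_one, mul_neg]
    ring
  have hpow : 2 ^ #s = 2 * 2 ^ (#s - 1) := by
    rw [← pow_succ', Nat.sub_add_cancel hs.card_pos]
  omega

theorem Nat.card_subtype_and_add_card_subtype_and_not {ι : Type*} [Finite ι] (P Q : ι → Prop) :
    Nat.card {x // P x ∧ Q x} + Nat.card {x // P x ∧ ¬Q x} = Nat.card {x // P x} := by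
  classical
  rw [← Nat.card_sum]
  exact Nat.card_congr (((subtypeSubtypeEquivSubtypeInter P Q).symm.sumCongr
    (subtypeSubtypeEquivSubtypeInter P (¬Q ·)).symm).trans (sumCompl _))

theorem Nat.card_subtype_ne_and_ne_add_two {α : Type*} [Finite α] {a b : α} (hab : a ≠ b) :
    Nat.card {x // x ≠ a ∧ x ≠ b} + 2 = Nat.card α := by
  classical
  have := Fintype.ofFinite α
  have hfilter : ({x | x ≠ a ∧ x ≠ b} : Finset α) = (univ.erase a).erase b := by
    ext x; simp [and_comm]
  simp only [Nat.card_eq_fintype_card]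
  rw [Fintype.card_subtype, hfilter, ← Finset.card_univ, ← card_erase_add_one (mem_univ a),
    ← card_erase_add_one (mem_erase.2 ⟨hab.symm, mem_univ b⟩)]

lemma eq_or_eq_or_exists_coe {α : Type*} {a b : α} (x : α) :
    x = a ∨ x = b ∨ ∃ y : {x // x ≠ a ∧ x ≠ b}, x = y := by
  by_cases ha : x = a
  · exact .inl ha
  by_cases hb : x = b
  · exact .inr (.inl hb)
  exact .inr (.inr ⟨⟨x, ha, hb⟩, rfl⟩)

namespace Equiv.Perm

variable {α : Type*}

def IsPairing (σ : Perm α) : Prop := Function.Involutive σ ∧ ∀ x, σ x ≠ x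

lemma IsPairing.apply_ne_and_ne_iff {a b : α} {σ : Perm α} (hσ : σ.IsPairing) (hab : σ a = b)
    (x : α) : (σ x ≠ a ∧ σ x ≠ b) ↔ (x ≠ a ∧ x ≠ b) := by
  simp only [ne_eq, ← hab, hσ.1.eq_iff, hσ.1 a]
  tauto

section RemovePair

variable [DecidableEq α] {a b : α}

section

variable (τ : Perm {x // x ≠ a ∧ x ≠ b})

lemma swap_mul_ofSubtype_apply_left : (swap a b * ofSubtype τ) a = b := by
  simp [ofSubtype_apply_of_not_mem τ (p := fun x => x ≠ a ∧ x ≠ b) (a := a) (by simp)]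

lemma swap_mul_ofSubtype_apply_right : (swap a b * ofSubtype τ) b = a := by
  simp [ofSubtype_apply_of_not_mem τ (p := fun x => x ≠ a ∧ x ≠ b) (a := b) (by simp)]

lemma swap_mul_ofSubtype_apply_coe (y : {x // x ≠ a ∧ x ≠ b}) :
    (swap a b * ofSubtype τ) y = τ y := by
  rw [mul_apply, ofSubtype_apply_coe, swap_apply_of_ne_of_ne (τ y).2.1 (τ y).2.2]

lemma isPairing_swap_mul_ofSubtype (hab : a ≠ b) (hτ : τ.IsPairing) :
    (swap a b * ofSubtype τ).IsPairing := by
  refine ⟨fun x => ?_, fun x => ?_⟩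
  · obtain rfl | rfl | ⟨y, rfl⟩ := eq_or_eq_or_exists_coe (a := a) (b := b) x
    · rw [swap_mul_ofSubtype_apply_left, swap_mul_ofSubtype_apply_right]
    · rw [swap_mul_ofSubtype_apply_right, swap_mul_ofSubtype_apply_left]
    · rw [swap_mul_ofSubtype_apply_coe, swap_mul_ofSubtype_apply_coe, hτ.1 y]
  · obtain rfl | rfl | ⟨y, rfl⟩ := eq_or_eq_or_exists_coe (a := a) (b := b) x
    · rw [swap_mul_ofSubtype_apply_left]; exact hab.symm
    · rw [swap_mul_ofSubtype_apply_right]; exact hab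
    · rw [swap_mul_ofSubtype_apply_coe, ne_eq, Subtype.coe_inj]; exact hτ.2 y

end

def pairingRemovePairEquiv (hab : a ≠ b) :
    {σ : Perm α // σ.IsPairing ∧ σ a = b} ≃
      {τ : Perm {x // x ≠ a ∧ x ≠ b} // τ.IsPairing} where
  toFun σ := ⟨σ.1.subtypePerm (σ.2.1.apply_ne_and_ne_iff σ.2.2),
    fun x => Subtype.ext (σ.2.1.1 x), fun x hx => σ.2.1.2 x (congrArg Subtype.val hx)⟩
  invFun τ := ⟨swap a b * ofSubtype τ.1, isPairing_swap_mul_ofSubtype τ.1 hab τ.2,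
    swap_mul_ofSubtype_apply_left τ.1⟩
  left_inv σ := by
    obtain ⟨σ, hσ, hab'⟩ := σ
    ext x
    obtain rfl | rfl | ⟨y, rfl⟩ := eq_or_eq_or_exists_coe (a := a) (b := b) x
    · exact (swap_mul_ofSubtype_apply_left _).trans hab'.symm
    · exact (swap_mul_ofSubtype_apply_right _).trans (hσ.1.eq_iff.mp hab')
    · exact swap_mul_ofSubtype_apply_coe _ y
  right_inv τ := by
    ext y
    exact swap_mul_ofSubtype_apply_coe τ.1 y

end RemovePair

theorem card_isPairing [Finite α] {m : ℕ} (h : Nat.card α = 2 * m) :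
    Nat.card {σ : Perm α // σ.IsPairing} = (2 * m - 1)‼ := by
  classical
  induction m generalizing α with
  | zero =>
    have : IsEmpty α := Finite.card_eq_zero_iff.mp h
    have : Unique {σ : Perm α // σ.IsPairing} :=
      ⟨⟨⟨1, isEmptyElim, isEmptyElim⟩⟩, fun σ => Subtype.ext (Subsingleton.elim _ _)⟩
    simp
  | succ m ih =>
    obtain ⟨a⟩ : Nonempty α := Nat.card_pos_iff.mp (by omega) |>.1
    have := Fintype.ofFinite α
    have hfiber (b : {b // b ≠ a}) :
        Nat.card {σ : Perm α // σ.IsPairing ∧ σ a = b} = (2 * m - 1)‼ := by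
      rw [Nat.card_congr (pairingRemovePairEquiv (Ne.symm b.2))]
      exact ih (by have := Nat.card_subtype_ne_and_ne_add_two (Ne.symm b.2); omega)
    have hpartners : Fintype.card {b // b ≠ a} = 2 * m + 1 := by
      rw [Fintype.card_subtype_compl, Fintype.card_subtype_eq, ← Nat.card_eq_fintype_card, h]
      omega
    let byPartner : {σ : Perm α // σ.IsPairing} ≃
        Σ b : {b // b ≠ a}, {σ : Perm α // σ.IsPairing ∧ σ a = b} :=
      { toFun σ := ⟨⟨σ.1 a, σ.2.2 a⟩, σ.1, σ.2, rfl⟩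
        invFun p := ⟨p.2.1, p.2.2.1⟩
        left_inv _ := rfl
        right_inv := fun ⟨⟨_, _⟩, _, _, rfl⟩ => rfl }
    rw [Nat.card_congr byPartner, Nat.card_sigma, sum_congr rfl fun b _ => hfiber b, sum_const,
      card_univ, hpartners, smul_eq_mul, show 2 * (m + 1) - 1 = 2 * m + 1 by omega,
      Nat.doubleFactorial_add_one]

lemma filter_decide_mem_or_apply_mem [DecidableEq α] {σ : Perm α} {S A : Finset α}
    (hS : ∀ x, σ x ∈ S ↔ x ∉ S) (hA : A ⊆ S) :
    {x ∈ S | decide (x ∈ A ∨ σ x ∈ A) = true} = A := by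
  ext x
  simp only [mem_filter, decide_eq_true_eq]
  exact ⟨fun ⟨hxS, hx⟩ => hx.resolve_right fun h => (hS x).1 (hA h) hxS,
    fun hx => ⟨hA hx, .inl hx⟩⟩

section Decoration

variable [Fintype α] {σ : Perm α}

lemma IsPairing.exists_transversal (hσ : σ.IsPairing) :
    ∃ S : Finset α, ∀ x, σ x ∈ S ↔ x ∉ S := by
  classical
  let e := Fintype.equivFin α
  refine ⟨univ.filter fun x => e x < e (σ x), fun x => ?_⟩
  simp only [mem_filter, mem_univ, true_and, hσ.1 x, not_lt]
  exact ⟨le_of_lt, fun h => lt_of_le_of_ne h (e.injective.ne (hσ.2 x))⟩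

lemma IsPairing.card_filter_eq_two_mul (hσ : σ.IsPairing) {S : Finset α}
    (hS : ∀ x, σ x ∈ S ↔ x ∉ S) (p : α → Prop) [DecidablePred p]
    (hp : ∀ x, p (σ x) ↔ p x) :
    #{x | p x} = 2 * #{x ∈ S | p x} := by
  classical
  have hswap : #{x | p x ∧ x ∉ S} = #{x | p x ∧ x ∈ S} := by
    refine card_nbij' σ σ ?_ ?_ (fun x _ => hσ.1 x) (fun x _ => hσ.1 x) <;>
    · intro x hx
      simp_all
  have hsplit := card_filter_add_card_filter_not (s := {x | p x}) (· ∈ S)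
  rw [filter_filter, filter_filter, hswap] at hsplit
  have hS_filter : ({x | p x ∧ x ∈ S} : Finset α) = {x ∈ S | p x} := by
    ext x; simp [and_comm]
  rw [← hsplit, hS_filter, two_mul]

variable [DecidableEq α]

abbrev EvenDecoration (σ : Perm α) : Type _ :=
  {d : α → Bool // (∀ x, d (σ x) = d x) ∧ 4 ∣ #{x | d x = true}}

def IsPairing.evenDecorationEquiv (hσ : σ.IsPairing) {S : Finset α}
    (hS : ∀ x, σ x ∈ S ↔ x ∉ S) : EvenDecoration σ ≃ {A ∈ S.powerset | Even #A} where
  toFun d := ⟨{x ∈ S | d.1 x = true}, by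
    have hcard := hσ.card_filter_eq_two_mul hS (d.1 · = true) (by simp [d.2.1])
    have h4 := d.2.2
    rw [mem_filter, mem_powerset, Nat.even_iff]
    exact ⟨filter_subset _ _, by omega⟩⟩
  invFun A := ⟨fun x => decide (x ∈ A.1 ∨ σ x ∈ A.1), by
    obtain ⟨hAS, hA⟩ := mem_filter.1 A.2
    have hinv (x : α) :
        decide (σ x ∈ A.1 ∨ σ (σ x) ∈ A.1) = decide (x ∈ A.1 ∨ σ x ∈ A.1) := by
      simp only [hσ.1 x, or_comm]
    refine ⟨hinv, ?_⟩
    rw [hσ.card_filter_eq_two_mul hS _ (fun x => by dsimp only; rw [hinv]),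
      filter_decide_mem_or_apply_mem hS (mem_powerset.1 hAS)]
    obtain ⟨k, hk⟩ := hA
    exact ⟨k, by omega⟩⟩
  left_inv d := by
    refine Subtype.ext (funext fun x => ?_)
    by_cases hx : x ∈ S
    · have : σ x ∉ S := fun h => (hS x).1 h hx
      simp [hx, this]
    · simp [hx, (hS x).2 hx, d.2.1 x]
  right_inv A :=
    Subtype.ext (filter_decide_mem_or_apply_mem hS (mem_powerset.1 (mem_filter.1 A.2).1))

theorem IsPairing.card_evenDecoration [Nonempty α] (hσ : σ.IsPairing) :
    Nat.card (EvenDecoration σ) = 2 ^ (Fintype.card α / 2 - 1) := by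
  obtain ⟨S, hS⟩ := hσ.exists_transversal
  have hcard : Fintype.card α = 2 * #S := by
    simpa using hσ.card_filter_eq_two_mul hS (fun _ => True) (fun _ => Iff.rfl)
  have hS_nonempty : S.Nonempty := card_pos.1 (by have := Fintype.card_pos (α := α); omega)
  rw [Nat.card_congr (hσ.evenDecorationEquiv hS), Nat.card_eq_finsetCard,
    card_powerset_filter_even hS_nonempty, hcard, Nat.mul_div_cancel_left _ two_pos]

end Decoration

variable {β γ : Type*}

def HasHorizontalBlock (σ : Perm (β ⊕ γ)) : Prop := ∃ x, (σ x).isLeft = x.isLeft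

lemma isRight_apply_inl {σ : Perm (β ⊕ γ)} (hσ : ¬σ.HasHorizontalBlock) (b : β) :
    (σ (inl b)).isRight := by
  simpa [HasHorizontalBlock] using fun h => hσ ⟨inl b, h⟩

lemma isLeft_apply_inr {σ : Perm (β ⊕ γ)} (hσ : ¬σ.HasHorizontalBlock) (c : γ) :
    (σ (inr c)).isLeft := by
  simpa [HasHorizontalBlock] using fun h => hσ ⟨inr c, h⟩

def crossingPairingEquiv :
    {σ : Perm (β ⊕ γ) // σ.IsPairing ∧ ¬σ.HasHorizontalBlock} ≃ (β ≃ γ) where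
  toFun σ :=
    { toFun b := (σ.1 (inl b)).getRight (isRight_apply_inl σ.2.2 b)
      invFun c := (σ.1 (inr c)).getLeft (isLeft_apply_inr σ.2.2 c)
      left_inv b := by simp [σ.2.1.1 _]
      right_inv c := by simp [σ.2.1.1 _] }
  invFun e := ⟨(e.sumCongr e.symm).trans (sumComm γ β), ⟨fun x => by cases x <;> simp,
    fun x => by cases x <;> simp⟩, fun ⟨x, hx⟩ => by cases x <;> simp at hx⟩
  left_inv σ := by
    refine Subtype.ext (Equiv.ext fun x => ?_)
    cases x <;> simp
  right_inv e := Equiv.ext fun b => by simp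

theorem card_isPairing_not_hasHorizontalBlock [Finite β] :
    Nat.card {σ : Perm (β ⊕ β) // σ.IsPairing ∧ ¬σ.HasHorizontalBlock} =
      (Nat.card β)! := by
  rw [Nat.card_congr crossingPairingEquiv, ← Nat.card_perm]

end Equiv.Perm

namespace DecConnector

variable {n : ℕ}

instance : Finite (DecConnector n) :=
  Finite.of_injective (fun c => (c.conn, c.dec)) fun
    | ⟨_, _, _, _, _, _⟩, ⟨_, _, _, _, _, _⟩, rfl => rfl

def equivSigmaEvenDecoration (P : Perm (Fin n ⊕ Fin n) → Prop) :
    {c : DecConnector n // P c.conn} ≃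
      Σ σ : {σ : Perm (Fin n ⊕ Fin n) // σ.IsPairing ∧ P σ}, EvenDecoration σ.1 where
  toFun c :=
    ⟨⟨c.1.conn, ⟨c.1.invol, c.1.fpf⟩, c.2⟩, c.1.dec, c.1.dec_block, c.1.even_blocks⟩
  invFun p := ⟨⟨p.1.1, p.1.2.1.1, p.1.2.1.2, p.2.1, p.2.2.1, p.2.2.2⟩, p.1.2.2⟩
  left_inv _ := rfl
  right_inv _ := rfl

theorem card_subtype_conn (hn : 1 ≤ n) (P : Perm (Fin n ⊕ Fin n) → Prop) :
    Nat.card {c : DecConnector n // P c.conn} =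
      Nat.card {σ : Perm (Fin n ⊕ Fin n) // σ.IsPairing ∧ P σ} * 2 ^ (n - 1) := by
  classical
  have : Nonempty (Fin n ⊕ Fin n) := ⟨inl ⟨0, hn⟩⟩
  rw [Nat.card_congr (equivSigmaEvenDecoration P), Nat.card_sigma,
    sum_congr rfl fun σ _ => σ.2.1.card_evenDecoration, sum_const, card_univ, smul_eq_mul,
    ← Nat.card_eq_fintype_card]
  simp [Fintype.card_sum, ← two_mul]

theorem card (hn : 1 ≤ n) : Nat.card (DecConnector n) = (2 * n - 1)‼ * 2 ^ (n - 1) := by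
  rw [← Nat.card_congr (subtypeUnivEquiv fun _ => trivial), card_subtype_conn hn (fun _ => True),
    Nat.card_congr (subtypeEquivRight fun _ => Iff.of_eq (and_true _)),
    card_isPairing (m := n) (by simp [two_mul])]

def undecoratedEquiv (P : Perm (Fin n ⊕ Fin n) → Prop) :
    {c : DecConnector n // (∀ x, c.dec x = false) ∧ P c.conn} ≃
      {σ : Perm (Fin n ⊕ Fin n) // σ.IsPairing ∧ P σ} where
  toFun c := ⟨c.1.conn, ⟨c.1.invol, c.1.fpf⟩, c.2.2⟩
  invFun σ := ⟨⟨σ.1, σ.2.1.1, σ.2.1.2, fun _ => false, fun _ => rfl, by simp⟩,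
    fun _ => rfl, σ.2.2⟩
  left_inv := by
    rintro ⟨⟨conn, invol, fpf, dec, dec_block, even_blocks⟩, hdec, hP⟩
    obtain rfl : dec = fun _ => false := funext hdec
    rfl
  right_inv _ := rfl

end DecConnector

/-- For every `n ≥ 1` the cardinality of the disjoint union
`T_n ⊔ T_n^= ⊔ (T_n^0 ∩ T_n^=)` equals
`d(n) = (2^n + 1)·(2n−1)!! − (2^(n−1) + 1)·n!`.  Here `T_n^=` consists of the
decorated `n`-connectors with at least one horizontal block (a block `{x, conn x}`
with both points on the same side) and `T_n^0` of those with no decorated blocks. -/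
theorem card_brauerDiagramBasis (n : ℕ) (hn : 1 ≤ n) :
    Nat.card (DecConnector n ⊕
        {c : DecConnector n // ∃ x, (c.conn x).isLeft = x.isLeft} ⊕
        {c : DecConnector n //
          (∀ x, c.dec x = false) ∧ ∃ x, (c.conn x).isLeft = x.isLeft}) =
      (2 ^ n + 1) * Nat.doubleFactorial (2 * n - 1) -
        (2 ^ (n - 1) + 1) * Nat.factorial n := by
  set N := Nat.card {σ : Perm (Fin n ⊕ Fin n) // σ.IsPairing ∧ σ.HasHorizontalBlock}
  have hpairings : N + n ! = (2 * n - 1)‼ := by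
    rw [← card_isPairing (α := Fin n ⊕ Fin n) (by simp [two_mul]),
      ← Nat.card_subtype_and_add_card_subtype_and_not _ HasHorizontalBlock,
      card_isPairing_not_hasHorizontalBlock, Nat.card_fin]
  have hT_horizontal : Nat.card {c : DecConnector n // ∃ x, (c.conn x).isLeft = x.isLeft}
      = N * 2 ^ (n - 1) := DecConnector.card_subtype_conn hn HasHorizontalBlock
  have hT_undecorated : Nat.card {c : DecConnector n //
      (∀ x, c.dec x = false) ∧ ∃ x, (c.conn x).isLeft = x.isLeft} = N :=
    Nat.card_congr (DecConnector.undecoratedEquiv HasHorizontalBlock)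
  have hpow : 2 ^ n = 2 * 2 ^ (n - 1) := by
    rw [← pow_succ', Nat.sub_add_cancel hn]
  rw [Nat.card_sum, Nat.card_sum, DecConnector.card hn, hT_horizontal, hT_undecorated,
    ← hpairings, hpow]
  refine (Nat.sub_eq_of_eq_add ?_).symm
  ring
end

section
/- Let M be a commutative monoid and let d, d', x, t ∈ M satisfy d·d' = 1, x² = d², x·t = d·t, and t² = d²·t. Then every element of the submonoid of M generated by {d, d', x, t} is of one of the forms dᵃ·d'ᵇ, dᵃ·d'ᵇ·x, or dᵃ·d'ᵇ·t for some natural numbers a, b. (This is the paper's assertion Λ = ⟨δ^{±1}⟩·{1, ξ, θ} for the commutative monoid Λ presented by generators δ^{±1}, ξ, θ and relations ξ² = δ², ξθ = δθ, θ² = δ²θ.) -/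
/-- Let `M` be a commutative monoid and let `d, d', x, t ∈ M`
satisfy `d·d' = 1`, `x² = d²`, `x·t = d·t` and `t² = d²·t` (so that `d'` plays the
role of `δ⁻¹` and `d, x, t` of `δ, ξ, θ` in the presented commutative monoid
`Λ = ⟨δ^{±1}, ξ, θ ∣ ξ² = δ², ξθ = δθ, θ² = δ²θ⟩`).  Then every element of the
submonoid generated by `{d, d', x, t}` is of one of the forms `dᵃ·d'ᵇ`, `dᵃ·d'ᵇ·x`
or `dᵃ·d'ᵇ·t` for some natural numbers `a, b`; i.e. `Λ = ⟨δ^{±1}⟩·{1, ξ, θ}`. -/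
theorem lambda_normal_form {M : Type*} [CommMonoid M] (d d' x t : M)
    (h1 : d * d' = 1) (h2 : x ^ 2 = d ^ 2) (h3 : x * t = d * t)
    (h4 : t ^ 2 = d ^ 2 * t) :
    ∀ y ∈ Submonoid.closure ({d, d', x, t} : Set M), ∃ a b : ℕ,
      y = d ^ a * d' ^ b ∨ y = d ^ a * d' ^ b * x ∨ y = d ^ a * d' ^ b * t := by
  have hx : x * x = d * d := by
    have := h2; rw [pow_two, pow_two] at this; exact this
  have ht : t * t = d * d * t := by
    have := h4; rw [pow_two, pow_two] at this; exact this
  intro y hy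
  induction hy using Submonoid.closure_induction with
  | mem z hz =>
    simp only [Set.mem_insert_iff, Set.mem_singleton_iff] at hz
    rcases hz with rfl | rfl | rfl | rfl
    · exact ⟨1, 0, Or.inl (by simp)⟩
    · exact ⟨0, 1, Or.inl (by simp)⟩
    · exact ⟨0, 0, Or.inr (Or.inl (by simp))⟩
    · exact ⟨0, 0, Or.inr (Or.inr (by simp))⟩
  | one => exact ⟨0, 0, Or.inl (by simp)⟩
  | mul u v hu hv ihu ihv =>
    obtain ⟨a, b, ha⟩ := ihu
    obtain ⟨c, e, hc⟩ := ihv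
    rcases ha with rfl | rfl | rfl <;> rcases hc with rfl | rfl | rfl
    · exact ⟨a + c, b + e, Or.inl (by rw [pow_add, pow_add]; simp only [mul_assoc, mul_comm, mul_left_comm, pow_add])⟩
    · exact ⟨a + c, b + e, Or.inr (Or.inl (by rw [pow_add, pow_add]; simp only [mul_assoc, mul_comm, mul_left_comm, pow_add]))⟩
    · exact ⟨a + c, b + e, Or.inr (Or.inr (by rw [pow_add, pow_add]; simp only [mul_assoc, mul_comm, mul_left_comm, pow_add]))⟩
    · exact ⟨a + c, b + e, Or.inr (Or.inl (by rw [pow_add, pow_add]; simp only [mul_assoc, mul_comm, mul_left_comm, pow_add]))⟩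
    · refine ⟨a + c + 2, b + e, Or.inl ?_⟩
      rw [pow_add, pow_add, pow_add, pow_two]
      calc d ^ a * d' ^ b * x * (d ^ c * d' ^ e * x)
          = d ^ a * d ^ c * (d' ^ b * d' ^ e) * (x * x) := by simp only [mul_assoc, mul_comm, mul_left_comm, pow_add]
        _ = d ^ a * d ^ c * (d * d) * (d' ^ b * d' ^ e) := by rw [hx]; simp only [mul_assoc, mul_comm, mul_left_comm, pow_add]
    · refine ⟨a + c + 1, b + e, Or.inr (Or.inr ?_)⟩
      rw [pow_add, pow_add, pow_add, pow_one]
      calc d ^ a * d' ^ b * x * (d ^ c * d' ^ e * t)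
          = d ^ a * d ^ c * (d' ^ b * d' ^ e) * (x * t) := by simp only [mul_assoc, mul_comm, mul_left_comm, pow_add]
        _ = d ^ a * d ^ c * d * (d' ^ b * d' ^ e) * t := by rw [h3]; simp only [mul_assoc, mul_comm, mul_left_comm, pow_add]
    · exact ⟨a + c, b + e, Or.inr (Or.inr (by rw [pow_add, pow_add]; simp only [mul_assoc, mul_comm, mul_left_comm, pow_add]))⟩
    · refine ⟨a + c + 1, b + e, Or.inr (Or.inr ?_)⟩
      rw [pow_add, pow_add, pow_add, pow_one]
      calc d ^ a * d' ^ b * t * (d ^ c * d' ^ e * x)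
          = d ^ a * d ^ c * (d' ^ b * d' ^ e) * (x * t) := by simp only [mul_assoc, mul_comm, mul_left_comm, pow_add]
        _ = d ^ a * d ^ c * d * (d' ^ b * d' ^ e) * t := by rw [h3]; simp only [mul_assoc, mul_comm, mul_left_comm, pow_add]
    · refine ⟨a + c + 2, b + e, Or.inr (Or.inr ?_)⟩
      rw [pow_add, pow_add, pow_add, pow_two]
      calc d ^ a * d' ^ b * t * (d ^ c * d' ^ e * t)
          = d ^ a * d ^ c * (d' ^ b * d' ^ e) * (t * t) := by simp only [mul_assoc, mul_comm, mul_left_comm, pow_add]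
        _ = d ^ a * d ^ c * (d * d) * (d' ^ b * d' ^ e) * t := by rw [ht]; simp only [mul_assoc, mul_comm, mul_left_comm, pow_add]
end

section
/- R is an integral domain, the canonical ring homomorphism ℤ[δ^{±1}, l^{±1}] → R is injective, and it induces an isomorphism of fields of fractions; that is, Frac(R) is isomorphic to the rational function field ℚ(l, δ) = Frac(ℤ[δ^{±1}, l^{±1}]). (This justifies the paper's use of ℚ(l, δ) as a field containing R in Theorem 5.3.) -/
noncomputable section

/-- `ℤ[δ^{±1}, l^{±1}]`, realised as the group algebra `ℤ[ℤ × ℤ]`;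
the monomial `δ^a l^b` corresponds to `(a, b)`. -/
abbrev BaseRing : Type := AddMonoidAlgebra ℤ (ℤ × ℤ)

/-- `ℤ[δ^{±1}, l^{±1}][m] = ℤ[δ^{±1}, l^{±1}, m]`, realised as the monoid algebra
`ℤ[ℤ × ℤ × ℕ]`; the monomial `δ^a l^b m^c` corresponds to `(a, b, c)`. -/
abbrev PreR : Type := AddMonoidAlgebra ℤ (ℤ × ℤ × ℕ)

/-- The element `δ`. -/
def del : PreR := AddMonoidAlgebra.single ((1 : ℤ), (0 : ℤ), (0 : ℕ)) 1

/-- The element `l`. -/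
def ell : PreR := AddMonoidAlgebra.single ((0 : ℤ), (1 : ℤ), (0 : ℕ)) 1

/-- The element `l⁻¹`. -/
def ellInv : PreR := AddMonoidAlgebra.single ((0 : ℤ), (-1 : ℤ), (0 : ℕ)) 1

/-- The element `m`. -/
def mvar : PreR := AddMonoidAlgebra.single ((0 : ℤ), (0 : ℤ), (1 : ℕ)) 1

/-- The principal ideal of `ℤ[δ^{±1}, l^{±1}, m]` generated by the defining relation
`(1−δ)·m − l + l⁻¹`. -/
def RIdeal : Ideal PreR := Ideal.span {(1 - del) * mvar - ell + ellInv}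

/-- The ring `R = ℤ[δ^{±1}, l^{±1}, m] / ((1−δ)m − l + l⁻¹)`. -/
abbrev RBMW : Type := PreR ⧸ RIdeal

/-- The inclusion `ℤ[δ^{±1}, l^{±1}] → ℤ[δ^{±1}, l^{±1}, m]`, `(a,b) ↦ (a,b,0)`. -/
def baseToPre : BaseRing →+* PreR :=
  AddMonoidAlgebra.mapDomainRingHom ℤ
    (AddMonoidHom.prodMap (AddMonoidHom.id ℤ) (AddMonoidHom.inl ℤ ℕ))

/-- The canonical ring homomorphism `ℤ[δ^{±1}, l^{±1}] → R`, the composite of the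
inclusion into the polynomial ring (in `m`) with the quotient map. -/
def canMap : BaseRing →+* RBMW := (Ideal.Quotient.mk RIdeal).comp baseToPre

/-! Write `A = ℤ[δ^{±1}, l^{±1}]`, `a = 1 - δ` and `b = l - l⁻¹`, so that `R = A[m]/(a m - b)`.
The evaluation `m ↦ b / a` into `Frac A` has kernel exactly `(a m - b)`: multiplying `p` by
`a ^ deg p` makes it congruent to a constant `r ∈ A` modulo `a m - b`, and `r = 0` once `p` vanishes
at `b / a`; the power of `a` can then be cancelled because `a` is prime (`A/(a) ≅ ℤ[l^{±1}]`) and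
does not divide `b`. Hence `R` embeds into `Frac A` and contains `A`, so it is a domain whose
fraction field is `Frac A`. -/

open Polynomial

namespace Polynomial

variable {A : Type*} [CommRing A]

theorem C_mul_X_sub_C_dvd_C_pow_natDegree_mul_sub (a b : A) (p : A[X]) :
    C a * X - C b ∣ C a ^ p.natDegree * p - C ((p.scaleRoots a).eval b) := by
  -- `a ^ deg p • p(X) = (p.scaleRoots a)(a X)`, and `a X - b` divides `q(a X) - q(b)`.
  have h := sub_dvd_eval_sub (C a * X) (C b) ((p.scaleRoots a).map C)
  rwa [eval_map, eval_map, scaleRoots_eval₂_mul, eval₂_C_X, eval₂_at_apply] at h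

variable [IsDomain A] {a b : A}

theorem C_mul_X_sub_C_dvd_of_dvd_C_mul (ha : Prime a) (hb : ¬a ∣ b) {q : A[X]}
    (hq : C a * X - C b ∣ C a * q) : C a * X - C b ∣ q := by
  obtain ⟨h, hh⟩ := hq
  have hCb : C b * h = C a * (X * h - q) := by rw [mul_sub, hh]; ring
  obtain ⟨h', rfl⟩ : C a ∣ h := (C_dvd_iff_dvd_coeff _ _).2 fun n =>
    (ha.dvd_or_dvd ⟨_, by rw [← coeff_C_mul, hCb, coeff_C_mul]⟩).resolve_left hb
  refine ⟨h', mul_left_cancel₀ (C_ne_zero.2 ha.ne_zero) ?_⟩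
  rw [hh]; ring

theorem C_mul_X_sub_C_dvd_of_dvd_C_pow_mul (ha : Prime a) (hb : ¬a ∣ b) {q : A[X]} (n : ℕ)
    (hq : C a * X - C b ∣ C a ^ n * q) : C a * X - C b ∣ q := by
  induction n generalizing q with
  | zero => simpa using hq
  | succ n ih =>
    rw [pow_succ, mul_assoc] at hq
    exact C_mul_X_sub_C_dvd_of_dvd_C_mul ha hb (ih hq)

theorem ker_eval₂RingHom_div {K : Type*} [Field K] [Algebra A K] [FaithfulSMul A K]
    (ha : Prime a) (hb : ¬a ∣ b) :
    RingHom.ker (eval₂RingHom (algebraMap A K) (algebraMap A K b / algebraMap A K a)) =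
      Ideal.span {C a * X - C b} := by
  have hroot : algebraMap A K a * (algebraMap A K b / algebraMap A K a) = algebraMap A K b :=
    mul_div_cancel₀ _ ((map_ne_zero_iff _ (FaithfulSMul.algebraMap_injective A K)).2 ha.ne_zero)
  ext p
  rw [RingHom.mem_ker, Ideal.mem_span_singleton]
  constructor
  · intro hp
    obtain ⟨q, hq⟩ := C_mul_X_sub_C_dvd_C_pow_natDegree_mul_sub a b p
    have hr : (p.scaleRoots a).eval b = 0 := by
      apply FaithfulSMul.algebraMap_injective A K
      have := congrArg (eval₂RingHom (algebraMap A K) (algebraMap A K b / algebraMap A K a)) hq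
      simp only [map_sub, map_mul, map_pow, coe_eval₂RingHom, eval₂_C, eval₂_X] at this hp
      rw [hroot, sub_self, zero_mul, hp, mul_zero, zero_sub, neg_eq_zero] at this
      rw [this, map_zero]
    rw [hr, C_0, sub_zero] at hq
    exact C_mul_X_sub_C_dvd_of_dvd_C_pow_mul ha hb _ ⟨q, hq⟩
  · rintro ⟨q, rfl⟩
    simp [hroot]

end Polynomial

theorem IsFractionRing.of_injective_of_comp_eq {A S K : Type*} [CommRing A] [CommRing S] [Field K]
    [Algebra A K] [IsFractionRing A K] [Algebra S K] (hS : Function.Injective (algebraMap S K))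
    (f : A →+* S) (hf : ∀ x, algebraMap S K (f x) = algebraMap A K x) : IsFractionRing S K := by
  have : FaithfulSMul S K := (faithfulSMul_iff_algebraMap_injective S K).2 hS
  refine IsFractionRing.of_field S K fun z => ?_
  obtain ⟨x, y, -, rfl⟩ := IsFractionRing.div_surjective A z
  exact ⟨f x, f y, by rw [hf, hf]⟩

namespace AddMonoidAlgebra

theorem one_sub_single_dvd_single_zsmul_sub_one {k G : Type*} [CommRing k] [AddCommGroup G]
    (g : G) (i : ℤ) : (1 - single g 1 : AddMonoidAlgebra k G) ∣ single (i • g) 1 - 1 := by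
  have hpow (n : ℕ) : (single g 1 : AddMonoidAlgebra k G) ^ n = single ((n : ℤ) • g) 1 := by
    rw [single_pow, one_pow, natCast_zsmul]
  obtain ⟨n, rfl | rfl⟩ := Int.eq_nat_or_neg i
  · rw [← hpow, ← dvd_neg, neg_sub]
    exact one_sub_dvd_one_sub_pow _ n
  · have : (single (-(n : ℤ) • g) 1 - 1 : AddMonoidAlgebra k G) =
        single (-(n : ℤ) • g) (1 : k) * (1 - single g 1 ^ n) := by
      rw [hpow, mul_sub, mul_one, single_mul_single, neg_smul, neg_add_cancel, mul_one, one_def]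
    rw [this]
    exact dvd_mul_of_dvd_right (one_sub_dvd_one_sub_pow _ n) _

theorem ker_mapDomainRingHom_snd (k H : Type*) [CommRing k] [AddCommGroup H] :
    RingHom.ker (mapDomainRingHom k (AddMonoidHom.snd ℤ H)) =
      Ideal.span {1 - single ((1 : ℤ), (0 : H)) (1 : k)} := by
  set ε := mapDomainRingHom k (AddMonoidHom.snd ℤ H)
  set σ := mapDomainRingHom k (AddMonoidHom.inr ℤ H)
  have hsection (p : AddMonoidAlgebra k (ℤ × H)) :
      1 - single ((1 : ℤ), (0 : H)) (1 : k) ∣ p - σ (ε p) := by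
    induction p using induction_linear with
    | zero => simp
    | add p q hp hq => rw [map_add, map_add, add_sub_add_comm]; exact dvd_add hp hq
    | single m r =>
      obtain ⟨i, h⟩ := m
      have : single (i, h) r - σ (ε (single (i, h) r)) =
          (single (i • ((1 : ℤ), (0 : H))) 1 - 1) * single (0, h) r := by
        simp [ε, σ, sub_mul, single_mul_single]
      rw [this]
      exact dvd_mul_of_dvd_left (one_sub_single_dvd_single_zsmul_sub_one _ i) _
  ext p
  rw [RingHom.mem_ker, Ideal.mem_span_singleton]
  constructor
  · intro hp
    simpa [hp] using hsection p
  · rintro ⟨q, rfl⟩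
    rw [map_mul, map_sub, map_one]
    simp [ε, one_def]

end AddMonoidAlgebra

open AddMonoidAlgebra

namespace BaseRing

def oneSubDelta : BaseRing := 1 - single (1, 0) 1

def ellSubEllInv : BaseRing := single (0, 1) 1 - single (0, -1) 1

theorem oneSubDelta_ne_zero : oneSubDelta ≠ 0 := by
  simp [oneSubDelta, sub_eq_zero, one_def, single_left_inj, Prod.ext_iff]

theorem prime_oneSubDelta : Prime oneSubDelta := by
  have h := RingHom.ker_isPrime (mapDomainRingHom ℤ (AddMonoidHom.snd ℤ ℤ))
  rw [ker_mapDomainRingHom_snd] at h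
  exact (Ideal.span_singleton_prime oneSubDelta_ne_zero).1 h

theorem not_oneSubDelta_dvd_ellSubEllInv : ¬oneSubDelta ∣ ellSubEllInv := by
  rw [← Ideal.mem_span_singleton, oneSubDelta, ← ker_mapDomainRingHom_snd, RingHom.mem_ker]
  simp only [ellSubEllInv, map_sub, mapDomainRingHom_apply, mapDomain_single]
  rw [sub_eq_zero, single_left_inj one_ne_zero]
  decide

end BaseRing

open BaseRing

namespace PreR

def equivPolynomial : PreR ≃+* BaseRing[X] :=
  (mapDomainRingEquiv ℤ (AddEquiv.prodAssoc.symm.trans AddEquiv.prodComm :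
      ℤ × ℤ × ℕ ≃+ ℕ × (ℤ × ℤ))).trans (curryRingEquiv.trans (toFinsuppIso BaseRing).symm)

theorem equivPolynomial_single (a b : ℤ) (c : ℕ) (x : ℤ) :
    equivPolynomial (single (a, b, c) x) = monomial c (single (a, b) x) := by
  simp [equivPolynomial]

theorem equivPolynomial_baseToPre (r : BaseRing) : equivPolynomial (baseToPre r) = C r := by
  induction r using induction_linear with
  | zero => simp
  | add p q hp hq => rw [map_add, map_add, hp, hq, C_add]
  | single m x =>
    obtain ⟨a, b⟩ := m
    simp [baseToPre, equivPolynomial_single]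

theorem equivPolynomial_relation :
    equivPolynomial ((1 - del) * mvar - ell + ellInv) = C oneSubDelta * X - C ellSubEllInv := by
  simp only [del, mvar, ell, ellInv, map_add, map_sub, map_mul, map_one, equivPolynomial_single]
  simp only [monomial_zero_left, Prod.mk_zero_zero, ← one_def, monomial_one_one_eq_X,
    oneSubDelta, ellSubEllInv, C_sub, C_1]
  ring

def toFractionRing : PreR →+* FractionRing BaseRing :=
  (eval₂RingHom (algebraMap BaseRing _)
    (algebraMap BaseRing _ ellSubEllInv / algebraMap BaseRing _ oneSubDelta)).comp
    equivPolynomial.toRingHom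

theorem ker_toFractionRing : RingHom.ker toFractionRing = RIdeal := by
  ext p
  rw [toFractionRing, ← RingHom.comap_ker, Ideal.mem_comap,
    ker_eval₂RingHom_div prime_oneSubDelta not_oneSubDelta_dvd_ellSubEllInv,
    Ideal.mem_span_singleton, ← equivPolynomial_relation, RingEquiv.toRingHom_eq_coe,
    RingHom.coe_coe, map_dvd_iff, RIdeal, Ideal.mem_span_singleton]

end PreR

namespace RBMW

def toFractionRing : RBMW →+* FractionRing BaseRing :=
  Ideal.Quotient.lift RIdeal PreR.toFractionRing fun _ hp => by
    rwa [← PreR.ker_toFractionRing, RingHom.mem_ker] at hp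

theorem toFractionRing_injective : Function.Injective toFractionRing :=
  RingHom.lift_injective_of_ker_le_ideal _ _ PreR.ker_toFractionRing.le

theorem toFractionRing_canMap (a : BaseRing) :
    toFractionRing (canMap a) = algebraMap BaseRing _ a := by
  simp [toFractionRing, PreR.toFractionRing, canMap, PreR.equivPolynomial_baseToPre]

end RBMW

/-- `R` is an integral domain, the canonical ring homomorphism
`ℤ[δ^{±1}, l^{±1}] → R` is injective, and it induces an isomorphism of fields of
fractions `Frac(R) ≅ ℚ(l, δ) = Frac(ℤ[δ^{±1}, l^{±1}])`, i.e. there is a ring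
isomorphism between the two fraction fields compatible with the canonical maps. -/
theorem rbmw_isDomain_and_fractionField :
    IsDomain RBMW ∧ Function.Injective canMap ∧
    ∃ e : FractionRing RBMW ≃+* FractionRing BaseRing,
      ∀ a : BaseRing,
        e (algebraMap RBMW (FractionRing RBMW) (canMap a)) =
          algebraMap BaseRing (FractionRing BaseRing) a := by
  let : Algebra RBMW (FractionRing BaseRing) := RBMW.toFractionRing.toAlgebra
  have hcomp (a : BaseRing) : algebraMap RBMW (FractionRing BaseRing) (canMap a) =
      algebraMap BaseRing (FractionRing BaseRing) a := RBMW.toFractionRing_canMap a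
  have : IsDomain RBMW := RBMW.toFractionRing_injective.isDomain _
  have : IsFractionRing RBMW (FractionRing BaseRing) :=
    .of_injective_of_comp_eq RBMW.toFractionRing_injective canMap hcomp
  refine ⟨inferInstance, fun x y hxy => IsFractionRing.injective BaseRing (FractionRing BaseRing) ?_,
    (FractionRing.algEquiv RBMW _).toRingEquiv, fun a => ?_⟩
  · rw [← hcomp, ← hcomp, hxy]
  · exact ((FractionRing.algEquiv RBMW _).commutes _).trans (hcomp a)
end
end
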